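/- arXiv:math/0404277 — 3 statements merged into one kernel-verified Lean document; each statement's English description precedes it below -/
import Mathlib

section
/- Suppose ‖D_n^p‖ ≤ C exp(−c₀ n^{−2(k+1)/(2k+3)} p) for every integer p ≥ 0, where c₀ > 0 and C > 0, and let (θ_i)_{i≥1} be real numbers with |θ_i| ≤ c/n. If G_0 = 0 and G_i = D_n G_{i−1} + n^{−(k+1)/(2k+3)} θ_i q for i ≥ 1, then for every i ≥ 1, ‖G_i‖ ≤ C c ‖q‖ (1 + c₀) c₀^{−1} n^{−(k+2)/(2k+3)}. -/
open Matrix Finset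
open scoped Matrix.Norms.L2Operator

/-!
Unrolling the recursion gives the discrete variation-of-constants formula
`G_i = ∑_{p<i} D_n^p (n^{-(k+1)/(2k+3)} θ_{i-p} q)`. Each term is bounded by
`C r^p · c n^{-(k+1)/(2k+3) - 1} ‖q‖` with `r = exp(-c₀ α)`, `α = n^{-2(k+1)/(2k+3)}`, and the
geometric series contributes `(1 - r)⁻¹ ≤ (1 + c₀ α)/(c₀ α) ≤ (1 + c₀)/(c₀ α)`, since `α ≤ 1`.
-/

theorem eq_sum_pow_smul_of_succ_eq_smul_add {A M : Type*} [Monoid A] [AddCommMonoid M]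
    [DistribMulAction A M] (T : A) {f G : ℕ → M} (h0 : G 0 = 0)
    (hsucc : ∀ i, G (i + 1) = T • G i + f (i + 1)) (m : ℕ) :
    G m = ∑ p ∈ range m, T ^ p • f (m - p) := by
  induction m with
  | zero => simpa using h0
  | succ m ih =>
    rw [hsucc, ih, sum_range_succ', smul_sum]
    simp only [pow_succ', mul_smul, pow_zero, one_smul, Nat.succ_sub_succ, Nat.sub_zero]

theorem norm_le_of_succ_eq_apply_add {𝕜 E : Type*} [NontriviallyNormedField 𝕜]
    [SeminormedAddCommGroup E] [NormedSpace 𝕜 E] (T : E →L[𝕜] E) {f G : ℕ → E} {B C r : ℝ}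
    (hC : 0 ≤ C) (hr₀ : 0 ≤ r) (hr₁ : r < 1) (hT : ∀ p : ℕ, ‖T ^ p‖ ≤ C * r ^ p)
    (hf : ∀ i, 1 ≤ i → ‖f i‖ ≤ B) (h0 : G 0 = 0)
    (hsucc : ∀ i, G (i + 1) = T (G i) + f (i + 1)) (m : ℕ) :
    ‖G m‖ ≤ C * B * (1 - r)⁻¹ := by
  have hB : 0 ≤ B := (norm_nonneg _).trans (hf 1 le_rfl)
  have hterm : ∀ p ∈ range m, ‖(T ^ p) (f (m - p))‖ ≤ C * B * r ^ p := fun p hp ↦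
    calc ‖(T ^ p) (f (m - p))‖ ≤ ‖T ^ p‖ * ‖f (m - p)‖ := (T ^ p).le_opNorm _
      _ ≤ C * r ^ p * B := by
        gcongr
        · exact hT p
        · exact hf _ (by have := mem_range.mp hp; omega)
      _ = C * B * r ^ p := by ring
  calc ‖G m‖ = ‖∑ p ∈ range m, (T ^ p) (f (m - p))‖ := by
        simpa only [ContinuousLinearMap.smul_def] using
          congrArg norm (eq_sum_pow_smul_of_succ_eq_smul_add T h0 hsucc m)
    _ ≤ ∑ p ∈ range m, C * B * r ^ p := norm_sum_le_of_le _ hterm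
    _ = C * B * ∑ p ∈ Ico 0 m, r ^ p := by rw [← mul_sum, range_eq_Ico]
    _ ≤ C * B * (1 - r)⁻¹ := by
        gcongr
        simpa using geom_sum_Ico_le_of_lt_one (m := 0) (n := m) hr₀ hr₁

theorem Real.inv_one_sub_exp_neg_mul_le {a x : ℝ} (ha : 0 < a) (hx₀ : 0 < x) (hx₁ : x ≤ 1) :
    (1 - Real.exp (-(a * x)))⁻¹ ≤ (1 + a) / (a * x) := by
  have hax : 0 < a * x := mul_pos ha hx₀
  have hexp : Real.exp (-(a * x)) ≤ (1 + a * x)⁻¹ := by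
    rw [Real.exp_neg]
    exact inv_anti₀ (by positivity) (by linarith [Real.add_one_le_exp (a * x)])
  have hgap : a * x / (1 + a * x) ≤ 1 - Real.exp (-(a * x)) := by
    have : a * x / (1 + a * x) = 1 - (1 + a * x)⁻¹ := by field_simp; ring
    linarith
  calc (1 - Real.exp (-(a * x)))⁻¹ ≤ (a * x / (1 + a * x))⁻¹ := inv_anti₀ (by positivity) hgap
    _ = (1 + a * x) / (a * x) := inv_div _ _
    _ ≤ (1 + a) / (a * x) := by gcongr; nlinarith

theorem Real.rpow_div_mul_rpow_of_exponents {x : ℝ} (hx : 0 < x) {k : ℝ} (hk : 2 * k + 3 ≠ 0) :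
    x ^ (-(k + 1) / (2 * k + 3)) / (x * x ^ (-(2 * (k + 1)) / (2 * k + 3))) =
      x ^ (-(k + 2) / (2 * k + 3)) := by
  rw [← div_div, ← Real.rpow_sub_one hx.ne', ← Real.rpow_sub hx]
  congr 1
  rw [eq_div_iff hk, sub_mul, sub_mul, div_mul_cancel₀ _ hk, div_mul_cancel₀ _ hk]
  ring

theorem nuisance_recursion_norm_bound_general
    (k n : ℕ) (hn : 1 ≤ n)
    (q : EuclideanSpace ℝ (Fin (k + 1)))
    (Dn : Matrix (Fin (k + 1)) (Fin (k + 1)) ℝ)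
    (c₀ C c : ℝ) (hc₀ : 0 < c₀) (hC : 0 < C)
    (hnorm : ∀ p : ℕ,
      ‖Dn ^ p‖ ≤ C * Real.exp (-c₀ * (n : ℝ) ^ (-(2 * ((k : ℝ) + 1)) / (2 * (k : ℝ) + 3)) * p))
    (θ : ℕ → ℝ) (hθ : ∀ i, 1 ≤ i → |θ i| ≤ c / n)
    (G : ℕ → EuclideanSpace ℝ (Fin (k + 1))) (hG0 : G 0 = 0)
    (hGrec : ∀ i, 1 ≤ i →
      G i = toEuclideanCLM (𝕜 := ℝ) Dn (G (i - 1))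
              + ((n : ℝ) ^ (-((k : ℝ) + 1) / (2 * (k : ℝ) + 3)) * θ i) • q) :
    ∀ i, 1 ≤ i →
      ‖G i‖ ≤ C * c * ‖q‖ * (1 + c₀) * c₀⁻¹ * (n : ℝ) ^ (-((k : ℝ) + 2) / (2 * (k : ℝ) + 3)) := by
  intro i _
  set α : ℝ := (n : ℝ) ^ (-(2 * ((k : ℝ) + 1)) / (2 * (k : ℝ) + 3))
  set β : ℝ := (n : ℝ) ^ (-((k : ℝ) + 1) / (2 * (k : ℝ) + 3))
  have hn₀ : (0 : ℝ) < n := by exact_mod_cast hn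
  have hα₀ : 0 < α := by positivity
  have hα₁ : α ≤ 1 :=
    Real.rpow_le_one_of_one_le_of_nonpos (by exact_mod_cast hn) (div_nonpos_of_nonpos_of_nonneg
      (by linarith [(k.cast_nonneg : (0 : ℝ) ≤ k)]) (by positivity))
  have hc : 0 ≤ c / n := (abs_nonneg _).trans (hθ 1 le_rfl)
  have hpow : ∀ p : ℕ, ‖toEuclideanCLM (𝕜 := ℝ) Dn ^ p‖ ≤ C * Real.exp (-(c₀ * α)) ^ p := by
    intro p
    rw [← map_pow, ← cstar_norm_def, ← Real.exp_nat_mul]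
    convert hnorm p using 3
    ring
  have hforce : ∀ j, 1 ≤ j → ‖(β * θ j) • q‖ ≤ β * (c / n) * ‖q‖ := fun j hj ↦ by
    rw [norm_smul, norm_mul, Real.norm_of_nonneg (by positivity)]
    gcongr
    exact hθ j hj
  calc ‖G i‖ ≤ C * (β * (c / n) * ‖q‖) * (1 - Real.exp (-(c₀ * α)))⁻¹ :=
        norm_le_of_succ_eq_apply_add _ hC.le (Real.exp_nonneg _)
          (Real.exp_lt_one_iff.mpr (by simpa using mul_pos hc₀ hα₀)) hpow hforce hG0
          (fun j ↦ by simpa using hGrec (j + 1) (by omega)) i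
    _ ≤ C * (β * (c / n) * ‖q‖) * ((1 + c₀) / (c₀ * α)) := by
        gcongr
        exact Real.inv_one_sub_exp_neg_mul_le hc₀ hα₀ hα₁
    _ = C * c * ‖q‖ * (1 + c₀) * c₀⁻¹ * (β / (n * α)) := by field_simp
    _ = _ := by rw [Real.rpow_div_mul_rpow_of_exponents hn₀ (by positivity)]

/-- If `D_n = I + n^{−2(k+1)/(2k+3)}(a − qA)` satisfies
`‖D_n^p‖ ≤ C exp(−c₀ n^{−2(k+1)/(2k+3)} p)` in the ℓ²-operator norm, `|θ_i| ≤ c/n`,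
`G_0 = 0` and `G_i = D_n G_{i−1} + n^{−(k+1)/(2k+3)} θ_i q`, then
`‖G_i‖ ≤ C c ‖q‖ (1 + c₀) c₀⁻¹ n^{−(k+2)/(2k+3)}` for every `i ≥ 1`. -/
theorem nuisance_recursion_norm_bound
    (k n : ℕ) (hn : 1 ≤ n)
    (q : EuclideanSpace ℝ (Fin (k + 1)))
    (a qA Dn : Matrix (Fin (k + 1)) (Fin (k + 1)) ℝ)
    (ha : ∀ j l, a j l = if (l : ℕ) = (j : ℕ) + 1 then 1 else 0)
    (hqA : ∀ x : Fin (k + 1) → ℝ, qA.mulVec x = fun j => x 0 * q j)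
    (hDn : Dn = 1 + (n : ℝ) ^ (-(2 * ((k : ℝ) + 1)) / (2 * (k : ℝ) + 3)) • (a - qA))
    (c₀ C c : ℝ) (hc₀ : 0 < c₀) (hC : 0 < C)
    (hnorm : ∀ p : ℕ,
      ‖Dn ^ p‖ ≤ C * Real.exp (-c₀ * (n : ℝ) ^ (-(2 * ((k : ℝ) + 1)) / (2 * (k : ℝ) + 3)) * p))
    (θ : ℕ → ℝ) (hθ : ∀ i, 1 ≤ i → |θ i| ≤ c / n)
    (G : ℕ → EuclideanSpace ℝ (Fin (k + 1))) (hG0 : G 0 = 0)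
    (hGrec : ∀ i, 1 ≤ i →
      G i = toEuclideanCLM (𝕜 := ℝ) Dn (G (i - 1))
              + ((n : ℝ) ^ (-((k : ℝ) + 1) / (2 * (k : ℝ) + 3)) * θ i) • q) :
    ∀ i, 1 ≤ i →
      ‖G i‖ ≤ C * c * ‖q‖ * (1 + c₀) * c₀⁻¹ * (n : ℝ) ^ (-((k : ℝ) + 2) / (2 * (k : ℝ) + 3)) :=
  nuisance_recursion_norm_bound_general k n hn q Dn c₀ C c hc₀ hC hnorm θ hθ G hG0 hGrec
end

section
/- Let (θ_i)_{i≥1} be real numbers with |θ_i| ≤ c/n, and suppose that D_n = I + n^{−2(k+1)/(2k+3)}(a − qA) satisfies ‖D_n^p‖ ≤ C exp(−c₀ n^{−2(k+1)/(2k+3)} p) for every integer p ≥ 0, where c₀ > 0 and C > 0. If F_0 = 0 and F_i = F_{i−1} + (1/n) a F_{i−1} + θ_i q_n − (F_{i−1})_0 q_n for i ≥ 1, then the first coordinate of F_i satisfies |(F_i)_0| ≤ C c ‖q‖ (1 + c₀) c₀^{−1} n^{−1} for every i ≥ 1; in particular (F_i)_0² ≤ (C c ‖q‖ (1 + c₀)/c₀)²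 n^{−2}. -/
open Matrix
open scoped Matrix.Norms.L2Operator

/-!
Conjugating by `Λ = diag(t^j)` with `t = n^{-1/(2k+3)}` turns the recursion into
`G_i = D_n G_{i-1} + θ_i ε q` for `G_i = Λ F_i` and `ε = n^{-2(k+1)/(2k+3)} = t^{2k+2}`, without
changing the first coordinate: `a` commutes with `Λ` up to a factor `t`, which together with
`1/n = t^{2k+3}` gives `ε a`, and `Λ q_n = ε q`. Duhamel's formula `G_i = ∑_m θ_{i-m} ε D_n^m q`
and the decay of `‖D_n^m‖` bound `‖G_i‖` by `C (c/n) ‖q‖ ε / (1 - e^{-c₀ε})`, and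
`ε / (1 - e^{-c₀ε}) ≤ (1 + c₀ε)/c₀ ≤ (1 + c₀)/c₀` since `e^x ≥ 1 + x` and `ε ≤ 1`.
-/

theorem eq_sum_pow_smul_of_succ_eq {S M : Type*} [Monoid S] [AddCommMonoid M]
    [DistribMulAction S M] (T : S) (b x : ℕ → M) (h0 : x 0 = 0)
    (hsucc : ∀ i, x (i + 1) = T • x i + b (i + 1)) (i : ℕ) :
    x i = ∑ m ∈ Finset.range i, T ^ m • b (i - m) := by
  induction i with
  | zero => simp [h0]
  | succ i ih =>
    rw [hsucc, ih, Finset.sum_range_succ', Finset.smul_sum]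
    simp only [pow_zero, one_smul, Nat.sub_zero, pow_succ', mul_smul, Nat.succ_sub_succ]

theorem norm_le_of_succ_eq_of_norm_pow_le {𝕜 E : Type*} [NontriviallyNormedField 𝕜]
    [SeminormedAddCommGroup E] [NormedSpace 𝕜 E] (T : E →L[𝕜] E) (b x : ℕ → E)
    {C r β : ℝ} (hr₀ : 0 ≤ r) (hr₁ : r < 1) (hT : ∀ p : ℕ, ‖T ^ p‖ ≤ C * r ^ p)
    (hb : ∀ i, 1 ≤ i → ‖b i‖ ≤ β) (h0 : x 0 = 0)
    (hsucc : ∀ i, x (i + 1) = T (x i) + b (i + 1)) (i : ℕ) :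
    ‖x i‖ ≤ C * β / (1 - r) := by
  have hC : 0 ≤ C := by simpa using (norm_nonneg _).trans (hT 0)
  have hβ : 0 ≤ β := (norm_nonneg _).trans (hb 1 le_rfl)
  rw [eq_sum_pow_smul_of_succ_eq T b x h0 hsucc i]
  calc ‖∑ m ∈ Finset.range i, T ^ m • b (i - m)‖
      ≤ ∑ m ∈ Finset.range i, C * β * r ^ m := by
        refine (norm_sum_le _ _).trans (Finset.sum_le_sum fun m hm => ?_)
        rw [ContinuousLinearMap.smul_def]
        calc ‖(T ^ m) (b (i - m))‖ ≤ ‖T ^ m‖ * ‖b (i - m)‖ := (T ^ m).le_opNorm _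
          _ ≤ C * r ^ m * β := by
            gcongr
            · exact hT m
            · exact hb _ (by grind)
          _ = C * β * r ^ m := by ring
    _ = C * β * ∑ m ∈ Finset.range i, r ^ m := by rw [Finset.mul_sum]
    _ ≤ C * β * (1 / (1 - r)) := by
        gcongr
        simpa using geom_sum_Ico_le_of_lt_one (m := 0) (n := i) hr₀ hr₁
    _ = C * β / (1 - r) := by ring

theorem Real.div_one_add_le_one_sub_exp_neg {x : ℝ} (hx : 0 ≤ x) :
    x / (1 + x) ≤ 1 - Real.exp (-x) := by
  have h : Real.exp (-x) ≤ (1 + x)⁻¹ := by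
    rw [Real.exp_neg]
    exact inv_anti₀ (by positivity) (by linarith [Real.add_one_le_exp x])
  have : x / (1 + x) = 1 - (1 + x)⁻¹ := by field_simp; ring
  linarith

theorem Real.div_one_sub_exp_neg_mul_le {c₀ ε : ℝ} (hc₀ : 0 < c₀) (hε₀ : 0 < ε) (hε₁ : ε ≤ 1) :
    ε / (1 - Real.exp (-(c₀ * ε))) ≤ (1 + c₀) / c₀ := by
  have hx : 0 < c₀ * ε := by positivity
  calc ε / (1 - Real.exp (-(c₀ * ε)))
      ≤ ε / (c₀ * ε / (1 + c₀ * ε)) :=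
        div_le_div_of_nonneg_left hε₀.le (by positivity)
          (Real.div_one_add_le_one_sub_exp_neg hx.le)
    _ = (1 + c₀ * ε) / c₀ := by field_simp
    _ ≤ (1 + c₀) / c₀ := by gcongr; nlinarith

theorem Real.rpow_neg_natCast_div {x : ℝ} (hx : 0 ≤ x) (m : ℕ) (d : ℝ) :
    x ^ (-(m : ℝ) / d) = (x ^ (-1 / d)) ^ m := by
  rw [← Real.rpow_mul_natCast hx]
  ring_nf

theorem Real.rpow_neg_one_div_pow_mul_rpow_neg_sub_div {x : ℝ} (hx : 0 < x) (m : ℕ) (s d : ℝ) :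
    (x ^ (-1 / d)) ^ m * x ^ (-((s - m) / d)) = x ^ (-s / d) := by
  rw [← Real.rpow_neg_natCast_div hx.le, ← Real.rpow_add hx]
  ring_nf

theorem norm_le_of_succ_eq_smul_of_norm_pow_le_exp {E : Type*} [SeminormedAddCommGroup E]
    [NormedSpace ℝ E] (T : E →L[ℝ] E) (v : E) (θ : ℕ → ℝ) (x : ℕ → E)
    {C c₀ ε η : ℝ} (hc₀ : 0 < c₀) (hε₀ : 0 < ε) (hε₁ : ε ≤ 1)
    (hT : ∀ p : ℕ, ‖T ^ p‖ ≤ C * Real.exp (-c₀ * ε * p)) (hθ : ∀ i, 1 ≤ i → |θ i| ≤ η)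
    (h0 : x 0 = 0) (hsucc : ∀ i, x (i + 1) = T (x i) + (θ (i + 1) * ε) • v) (i : ℕ) :
    ‖x i‖ ≤ C * η * ‖v‖ * ((1 + c₀) / c₀) := by
  set r := Real.exp (-(c₀ * ε))
  have hC : 0 ≤ C := by simpa using (norm_nonneg _).trans (hT 0)
  have hη : 0 ≤ η := (abs_nonneg _).trans (hθ 1 le_rfl)
  have hr₁ : r < 1 := Real.exp_lt_one_iff.mpr (by nlinarith)
  have hTr (p : ℕ) : ‖T ^ p‖ ≤ C * r ^ p := by
    rw [← Real.exp_nat_mul]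
    convert hT p using 3
    ring
  have hb (i : ℕ) (hi : 1 ≤ i) : ‖(θ i * ε) • v‖ ≤ η * ε * ‖v‖ := by
    rw [norm_smul, Real.norm_eq_abs, abs_mul, abs_of_pos hε₀]
    gcongr
    exact hθ i hi
  calc ‖x i‖ ≤ C * (η * ε * ‖v‖) / (1 - r) :=
        norm_le_of_succ_eq_of_norm_pow_le T _ x (Real.exp_pos _).le hr₁ hTr hb h0 hsucc i
    _ = C * η * ‖v‖ * (ε / (1 - r)) := by ring
    _ ≤ C * η * ‖v‖ * ((1 + c₀) / c₀) :=
        mul_le_mul_of_nonneg_left (Real.div_one_sub_exp_neg_mul_le hc₀ hε₀ hε₁) (by positivity)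

theorem shift_mul_diagonal_pow {R : Type*} [CommSemiring R] {m : ℕ}
    (a : Matrix (Fin m) (Fin m) R) (ha : ∀ j l, a j l = if (l : ℕ) = (j : ℕ) + 1 then 1 else 0)
    (t : R) :
    a * diagonal (fun j : Fin m => t ^ (j : ℕ)) =
      t • (diagonal (fun j : Fin m => t ^ (j : ℕ)) * a) := by
  ext j l
  simp only [mul_diagonal, diagonal_mul, Matrix.smul_apply, smul_eq_mul, ha]
  split_ifs with h
  · rw [h, pow_succ]; ring
  · simp

theorem diagonal_pow_mulVec_step {R : Type*} [CommRing R] {m N : ℕ}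
    (a qA : Matrix (Fin (m + 1)) (Fin (m + 1)) R)
    (ha : ∀ j l, a j l = if (l : ℕ) = (j : ℕ) + 1 then 1 else 0)
    (q qn : Fin (m + 1) → R) (hqA : ∀ x, qA *ᵥ x = fun j => x 0 * q j)
    (t θ : R) (hqn : ∀ j : Fin (m + 1), t ^ (j : ℕ) * qn j = t ^ N * q j)
    (x : Fin (m + 1) → R) :
    diagonal (fun j : Fin (m + 1) => t ^ (j : ℕ)) *ᵥ (x + t ^ (N + 1) • a *ᵥ x + θ • qn - x 0 • qn)
      = (1 + t ^ N • (a - qA)) *ᵥ (diagonal (fun j : Fin (m + 1) => t ^ (j : ℕ)) *ᵥ x)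
        + (θ * t ^ N) • q := by
  set Λ := diagonal (fun j : Fin (m + 1) => t ^ (j : ℕ))
  have hshift : a *ᵥ (Λ *ᵥ x) = t • (Λ *ᵥ (a *ᵥ x)) := by
    rw [mulVec_mulVec, shift_mul_diagonal_pow a ha, smul_mulVec, ← mulVec_mulVec]
  ext j
  have hj := congrFun hshift j
  simp only [Λ, mulVec_diagonal, Pi.smul_apply, smul_eq_mul] at hj
  simp only [add_mulVec, one_mulVec, smul_mulVec, sub_mulVec, hqA, Pi.add_apply, Pi.sub_apply,
    Pi.smul_apply, smul_eq_mul, hj, Λ, mulVec_diagonal, Fin.val_zero, pow_zero, one_mul]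
  linear_combination (θ - x 0) * hqn j

theorem nuisance_perturbation_first_coordinate_bound_general
    (k n : ℕ) (hn : 1 ≤ n)
    (q : EuclideanSpace ℝ (Fin (k + 1)))
    (qn : Fin (k + 1) → ℝ)
    (hqn : ∀ j, qn j
      = q j * (n : ℝ) ^ (-((2 * ((k : ℝ) + 1) - (j : ℕ)) / (2 * (k : ℝ) + 3))))
    (a qA Dn : Matrix (Fin (k + 1)) (Fin (k + 1)) ℝ)
    (ha : ∀ j l, a j l = if (l : ℕ) = (j : ℕ) + 1 then 1 else 0)
    (hqA : ∀ x : Fin (k + 1) → ℝ, qA.mulVec x = fun j => x 0 * q j)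
    (hDn : Dn = 1 + (n : ℝ) ^ (-(2 * ((k : ℝ) + 1)) / (2 * (k : ℝ) + 3)) • (a - qA))
    (c₀ C c : ℝ) (hc₀ : 0 < c₀)
    (hnorm : ∀ p : ℕ,
      ‖Dn ^ p‖ ≤ C * Real.exp (-c₀ * (n : ℝ) ^ (-(2 * ((k : ℝ) + 1)) / (2 * (k : ℝ) + 3)) * p))
    (θ : ℕ → ℝ) (hθ : ∀ i, 1 ≤ i → |θ i| ≤ c / n)
    (F : ℕ → Fin (k + 1) → ℝ) (hF0 : F 0 = 0)
    (hFrec : ∀ i, 1 ≤ i →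
      F i = F (i - 1) + (1 / (n : ℝ)) • a.mulVec (F (i - 1))
              + θ i • qn - F (i - 1) 0 • qn) :
    ∀ i, 1 ≤ i →
      |F i 0| ≤ C * c * ‖q‖ * (1 + c₀) * c₀⁻¹ * (n : ℝ)⁻¹ ∧
      (F i 0) ^ 2 ≤ (C * c * ‖q‖ * (1 + c₀) / c₀) ^ 2 * ((n : ℝ) ^ 2)⁻¹ := by
  have hn₀ : (0 : ℝ) < n := Nat.cast_pos.mpr hn
  set d : ℝ := 2 * (k : ℝ) + 3 with hd
  set t : ℝ := (n : ℝ) ^ (-1 / d)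
  have hε : (n : ℝ) ^ (-(2 * ((k : ℝ) + 1)) / d) = t ^ (2 * k + 2) := by
    rw [← Real.rpow_neg_natCast_div hn₀.le]; push_cast; ring_nf
  have hn_inv : 1 / (n : ℝ) = t ^ (2 * k + 2 + 1) := by
    rw [← Real.rpow_neg_natCast_div hn₀.le,
      show -(((2 * k + 2 + 1 : ℕ) : ℝ)) / d = -1 by rw [hd]; push_cast; field_simp; ring,
      Real.rpow_neg_one, one_div]
  have hqn' (j : Fin (k + 1)) : t ^ (j : ℕ) * qn j = t ^ (2 * k + 2) * q j := by
    rw [hqn, mul_left_comm, Real.rpow_neg_one_div_pow_mul_rpow_neg_sub_div hn₀, hε, mul_comm]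
  have ht₁ : t ≤ 1 := Real.rpow_le_one_of_one_le_of_nonpos (by exact_mod_cast hn)
    (div_nonpos_of_nonpos_of_nonneg (by norm_num) (by positivity))
  set Λ := diagonal (fun j : Fin (k + 1) => t ^ (j : ℕ))
  set G : ℕ → EuclideanSpace ℝ (Fin (k + 1)) := fun i => WithLp.toLp 2 (Λ *ᵥ F i)
  have hG (i : ℕ) :
      G (i + 1) = toEuclideanCLM (𝕜 := ℝ) Dn (G i) + (θ (i + 1) * t ^ (2 * k + 2)) • q := by
    have hF := hFrec (i + 1) (by omega)
    rw [Nat.add_sub_cancel, hn_inv] at hF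
    simp only [G, Λ, hF, diagonal_pow_mulVec_step a qA ha _ qn hqA t _ hqn', hDn, hε,
      toEuclideanCLM_toLp, WithLp.toLp_add, WithLp.toLp_smul, WithLp.toLp_ofLp]
  have hGnorm := norm_le_of_succ_eq_smul_of_norm_pow_le_exp (toEuclideanCLM (𝕜 := ℝ) Dn) q θ G
    hc₀ (by positivity) (pow_le_one₀ (by positivity) ht₁)
    (fun p => by rw [← map_pow, l2_opNorm_toEuclideanCLM, ← hε]; exact hnorm p) hθ
    (by simp [G, hF0]) hG
  intro i _
  have hF : |F i 0| ≤ C * c * ‖q‖ * (1 + c₀) * c₀⁻¹ * (n : ℝ)⁻¹ :=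
    calc |F i 0| = |G i 0| := by simp [G, Λ, mulVec_diagonal]
      _ ≤ ‖G i‖ := PiLp.norm_apply_le (G i) 0
      _ ≤ _ := (hGnorm i).trans_eq (by ring)
  refine ⟨hF, ?_⟩
  calc (F i 0) ^ 2 = |F i 0| ^ 2 := (sq_abs _).symm
    _ ≤ (C * c * ‖q‖ * (1 + c₀) * c₀⁻¹ * (n : ℝ)⁻¹) ^ 2 := by gcongr
    _ = (C * c * ‖q‖ * (1 + c₀) / c₀) ^ 2 * ((n : ℝ) ^ 2)⁻¹ := by ring

/-- Deterministic content of Lemma A.1: if `D_n = I + n^{−2(k+1)/(2k+3)}(a − qA)` satisfies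
`‖D_n^p‖ ≤ C exp(−c₀ n^{−2(k+1)/(2k+3)} p)`, `|θ_i| ≤ c/n`, and `F_0 = 0`,
`F_i = F_{i−1} + (1/n) a F_{i−1} + θ_i q_n − (F_{i−1})₀ q_n`, then
`|(F_i)₀| ≤ C c ‖q‖ (1 + c₀) c₀⁻¹ n⁻¹`, hence `(F_i)₀² ≤ (C c ‖q‖ (1 + c₀)/c₀)² n⁻²`. -/
theorem nuisance_perturbation_first_coordinate_bound
    (k n : ℕ) (hn : 1 ≤ n)
    (q : EuclideanSpace ℝ (Fin (k + 1)))
    (qn : Fin (k + 1) → ℝ)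
    (hqn : ∀ j, qn j
      = q j * (n : ℝ) ^ (-((2 * ((k : ℝ) + 1) - (j : ℕ)) / (2 * (k : ℝ) + 3))))
    (a qA Dn : Matrix (Fin (k + 1)) (Fin (k + 1)) ℝ)
    (ha : ∀ j l, a j l = if (l : ℕ) = (j : ℕ) + 1 then 1 else 0)
    (hqA : ∀ x : Fin (k + 1) → ℝ, qA.mulVec x = fun j => x 0 * q j)
    (hDn : Dn = 1 + (n : ℝ) ^ (-(2 * ((k : ℝ) + 1)) / (2 * (k : ℝ) + 3)) • (a - qA))
    (c₀ C c : ℝ) (hc₀ : 0 < c₀) (hC : 0 < C)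
    (hnorm : ∀ p : ℕ,
      ‖Dn ^ p‖ ≤ C * Real.exp (-c₀ * (n : ℝ) ^ (-(2 * ((k : ℝ) + 1)) / (2 * (k : ℝ) + 3)) * p))
    (θ : ℕ → ℝ) (hθ : ∀ i, 1 ≤ i → |θ i| ≤ c / n)
    (F : ℕ → Fin (k + 1) → ℝ) (hF0 : F 0 = 0)
    (hFrec : ∀ i, 1 ≤ i →
      F i = F (i - 1) + (1 / (n : ℝ)) • a.mulVec (F (i - 1))
              + θ i • qn - F (i - 1) 0 • qn) :
    ∀ i, 1 ≤ i →
      |F i 0| ≤ C * c * ‖q‖ * (1 + c₀) * c₀⁻¹ * (n : ℝ)⁻¹ ∧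
      (F i 0) ^ 2 ≤ (C * c * ‖q‖ * (1 + c₀) / c₀) ^ 2 * ((n : ℝ) ^ 2)⁻¹ :=
  nuisance_perturbation_first_coordinate_bound_general k n hn q qn hqn a qA Dn ha hqA hDn c₀ C c hc₀
    hnorm θ hθ F hF0 hFrec
end

section
/- Let V : [0, ∞) → ℝ be differentiable and nonnegative, and let c₁, c₂, c₃ > 0 be constants such that V′(t) ≤ −c₁ V(t) + c₂ √(V(t)) + c₃ for all t ≥ 0. Then for every t ≥ 0, V(t) ≤ V(0) + (2c₂² + c₁c₃)/(0.5 c₁²) = V(0) + (4c₂² + 2c₁c₃)/c₁². -/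
open Set

/-- If `V : [0,∞) → ℝ` is differentiable, nonnegative, and satisfies the differential
inequality `V′(t) ≤ −c₁ V(t) + c₂ √(V(t)) + c₃` with `c₁, c₂, c₃ > 0`, then
`V(t) ≤ V(0) + (2 c₂² + c₁ c₃)/(0.5 c₁²)` for all `t ≥ 0`. -/
theorem lyapunov_sqrt_differential_inequality_bound
    (V V' : ℝ → ℝ) (c₁ c₂ c₃ : ℝ)
    (hc₁ : 0 < c₁) (hc₂ : 0 < c₂) (hc₃ : 0 < c₃)
    (hderiv : ∀ t ∈ Ici (0 : ℝ), HasDerivWithinAt V (V' t) (Ici 0) t)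
    (hnonneg : ∀ t ∈ Ici (0 : ℝ), 0 ≤ V t)
    (hineq : ∀ t ∈ Ici (0 : ℝ), V' t ≤ -c₁ * V t + c₂ * Real.sqrt (V t) + c₃) :
    ∀ t ∈ Ici (0 : ℝ), V t ≤ V 0 + (2 * c₂ ^ 2 + c₁ * c₃) / (0.5 * c₁ ^ 2) := by
  intro t ht
  set M : ℝ := (2 * c₂ ^ 2 + c₁ * c₃) / (0.5 * c₁ ^ 2) with hMdef
  have hMpos : 0 < M := by positivity
  have hM2 : M * (0.5 * c₁ ^ 2) = 2 * c₂ ^ 2 + c₁ * c₃ :=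
    div_mul_cancel₀ _ (by positivity)
  have hV0 : 0 ≤ V 0 := hnonneg 0 self_mem_Ici
  set C : ℝ := V 0 + M with hCdef
  have hCpos : 0 < C := by linarith
  have key : V t ≤ (fun _ : ℝ => C) t := by
    refine image_le_of_deriv_right_lt_deriv_boundary (f := V) (f' := V') (a := 0) (b := t)
      (B := fun _ => C) (B' := fun _ => 0) ?_ ?_ ?_ ?_ ?_ ⟨ht, le_rfl⟩
    · exact fun x hx => ((hderiv x hx.1).continuousWithinAt).mono
        (Icc_subset_Ici_self)
    · exact fun x hx => (hderiv x hx.1).mono (Ici_subset_Ici.2 hx.1)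
    · linarith
    · exact fun x => hasDerivAt_const x C
    · intro x hx hVx
      have h1 := hineq x hx.1
      rw [hVx] at h1
      have hs : Real.sqrt C ^ 2 = C := Real.sq_sqrt hCpos.le
      have hspos : 0 < Real.sqrt C := Real.sqrt_pos.2 hCpos
      have hCM : M ≤ C := by linarith
      show V' x < 0
      nlinarith [sq_nonneg (2 * c₂ - c₁ * Real.sqrt C), sq_nonneg c₁,
        mul_pos hc₂ hspos, mul_pos hc₁ hc₃]
  exact le_of_le_of_eq key rfl
end
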